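/- In the Case II setting, let I be the two-sided *-ideal of Pol(O_F^+) generated by all entries of the blocks C_{μν} with (μ,ν) ≠ (r,r) and all entries of the blocks A_{μν} with μ ≠ ν. Then Pol(O_F^+)/I is *-isomorphic to the universal unital complex *-algebra generated by families a^{(ν)}_{jk} (ν = 1,…,r−1, 1 ≤ j,k ≤ M_ν) and v_{jk} (1 ≤ j,k ≤ 2M_r) subject to: for each ν ≤ r−1, both A_ν = (a^{(ν)}_{jk}) and conj(A_ν) are unitary; and V = (v_{jk}) is unitary with V = J·conj(V)·J^{-1}, where J = [[0, I_{M_r}],[−I_{M_r}, 0]]. The isomorphism sends the class of an entry of A_{νν} (ν ≤ r−1) to the corresponding a^{(ν)}_{jk}, the class of an entry of A_{rr} to the corresponding entry of the upper-left M_r×M_r block of V, and the class of an entry of C_{rr} to the corresponding entry of the lower-left M_r×M_r block of V. (This presented algebra is the free product (⋆_{ν=1}^{r−1} Pol(U_{M_ν}^+)) ⋆ Pol(O_J^+).) -/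

import Mathlib

open scoped ComplexOrder

/-- The defining relations of `Pol(O_F⁺)`: `U` is unitary and `U·F = F·conj(U)`
(equivalently `U = F·conj(U)·F⁻¹`). -/
def OrthRel {ι : Type} [Fintype ι] [DecidableEq ι] {A : Type} [Ring A] [Algebra ℂ A]
    [StarRing A] (F : Matrix ι ι ℂ) (u : Matrix ι ι A) : Prop :=
  u * u.conjTranspose = 1 ∧ u.conjTranspose * u = 1 ∧
    u * F.map (algebraMap ℂ A) = F.map (algebraMap ℂ A) * u.map star

/-- A presentation of the universal unital complex *-algebra `Pol(O_F⁺)`: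
a unital complex *-algebra carrying a matrix of generators `u` satisfying the
defining relations, universal among all such. -/
structure PolO {ι : Type} [Fintype ι] [DecidableEq ι] (F : Matrix ι ι ℂ) where
  carrier : Type
  [isRing : Ring carrier]
  [isAlgebra : Algebra ℂ carrier]
  [isStarRing : StarRing carrier]
  [isStarModule : StarModule ℂ carrier]
  u : Matrix ι ι carrier
  rel : OrthRel F u
  universal : ∀ (B : Type) [Ring B] [Algebra ℂ B] [StarRing B] [StarModule ℂ B]
      (v : Matrix ι ι B), OrthRel F v →
      ∃! φ : carrier →⋆ₐ[ℂ] B, ∀ j k, φ (u j k) = v j k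

attribute [instance] PolO.isRing PolO.isAlgebra PolO.isStarRing PolO.isStarModule

/-- The defining relations of `Pol(U_N⁺)`: both `U` and `conj(U)` are unitary. -/
def BiUnitary {ι : Type} [Fintype ι] [DecidableEq ι] {A : Type} [Ring A] [Algebra ℂ A]
    [StarRing A] (u : Matrix ι ι A) : Prop :=
  u * u.conjTranspose = 1 ∧ u.conjTranspose * u = 1 ∧
    u.map star * (u.map star).conjTranspose = 1 ∧ (u.map star).conjTranspose * u.map star = 1

/-- A presentation of the universal unital complex *-algebra `Pol(U_N⁺)` (`N = #ι`). -/
structure PolU (ι : Type) [Fintype ι] [DecidableEq ι] where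
  carrier : Type
  [isRing : Ring carrier]
  [isAlgebra : Algebra ℂ carrier]
  [isStarRing : StarRing carrier]
  [isStarModule : StarModule ℂ carrier]
  u : Matrix ι ι carrier
  rel : BiUnitary u
  universal : ∀ (B : Type) [Ring B] [Algebra ℂ B] [StarRing B] [StarModule ℂ B]
      (v : Matrix ι ι B), BiUnitary v →
      ∃! φ : carrier →⋆ₐ[ℂ] B, ∀ j k, φ (u j k) = v j k

attribute [instance] PolU.isRing PolU.isAlgebra PolU.isStarRing PolU.isStarModule

/-- A unital complex *-algebra is RFD if finite-dimensional *-representations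
separate its points. -/
def IsRFD (A : Type) [Ring A] [Algebra ℂ A] [StarRing A] : Prop :=
  ∀ a : A, a ≠ 0 → ∃ (n : ℕ) (π : A →⋆ₐ[ℂ] Matrix (Fin n) (Fin n) ℂ), π a ≠ 0

/-- A tracial state on a unital complex *-algebra. -/
structure TracialState (A : Type) [Ring A] [Algebra ℂ A] [StarRing A] where
  toFun : A →ₗ[ℂ] ℂ
  map_one' : toFun 1 = 1
  nonneg' : ∀ a : A, 0 ≤ toFun (star a * a)
  tracial' : ∀ a b : A, toFun (a * b) = toFun (b * a)

/-- The Kac ideal: elements killed by `τ(a^* a)` for every tracial state `τ`. -/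
def kacIdeal (A : Type) [Ring A] [Algebra ℂ A] [StarRing A] : Set A :=
  {a : A | ∀ τ : TracialState A, τ.toFun (star a * a) = 0}

/-- The RFD ideal: the intersection of the kernels of all finite-dimensional
*-representations. -/
def rfdIdeal (A : Type) [Ring A] [Algebra ℂ A] [StarRing A] : Set A :=
  {a : A | ∀ (n : ℕ) (π : A →⋆ₐ[ℂ] Matrix (Fin n) (Fin n) ℂ), π a = 0}

/-- A subset of a *-ring which is a two-sided ideal closed under the star operation. -/
def IsStarIdeal {A : Type} [Ring A] [StarRing A] (T : Set A) : Prop :=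
  (0 : A) ∈ T ∧ (∀ a b, a ∈ T → b ∈ T → a + b ∈ T) ∧
    (∀ x a, a ∈ T → x * a ∈ T ∧ a * x ∈ T) ∧ (∀ a, a ∈ T → star a ∈ T)

/-- The two-sided *-ideal generated by a set. -/
def starIdealSpan {A : Type} [Ring A] [StarRing A] (S : Set A) : Set A :=
  ⋂₀ {T : Set A | IsStarIdeal T ∧ S ⊆ T}

/-- The index set in the Case II setting: for each `ν = 1,…,r` a block `P_ν ⊕ Q_ν`
of size `2M_ν`. -/
abbrev CaseIIIdx (r : ℕ) (M : Fin r → ℕ) : Type := Σ ν : Fin r, (Fin (M ν) ⊕ Fin (M ν))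

/-- The Case II matrix `F`: block-diagonal with blocks
`[[0, q_ν·I_{M_ν}], [−q_ν⁻¹·I_{M_ν}, 0]]` for `ν = 1,…,r`. -/
noncomputable def FCaseII (r : ℕ) (q : Fin r → ℝ) (M : Fin r → ℕ) :
    Matrix (CaseIIIdx r M) (CaseIIIdx r M) ℂ := fun a b =>
  match a, b with
  | ⟨ν, .inl j⟩, ⟨μ, .inr k⟩ =>
      if ν = μ ∧ (j : ℕ) = (k : ℕ) then ((q ν : ℝ) : ℂ) else 0
  | ⟨ν, .inr j⟩, ⟨μ, .inl k⟩ =>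
      if ν = μ ∧ (j : ℕ) = (k : ℕ) then ((-(q ν)⁻¹ : ℝ) : ℂ) else 0
  | _, _ => 0

/-- The standard symplectic matrix `J = [[0, I_m], [−I_m, 0]]`, indexed by `Fin m ⊕ Fin m`. -/
def symplJSum (m : ℕ) : Matrix (Fin m ⊕ Fin m) (Fin m ⊕ Fin m) ℂ := fun a b =>
  match a, b with
  | .inl j, .inr k => if (j : ℕ) = (k : ℕ) then 1 else 0
  | .inr j, .inl k => if (j : ℕ) = (k : ℕ) then -1 else 0
  | _, _ => 0

/-- A presentation of the free product `(⋆_{ν=1}^{r−1} Pol(U⁺_{M_ν})) ⋆ Pol(O_J⁺)`: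
the universal unital complex *-algebra generated by families `a⁽ᵛ⁾` (`ν = 1,…,r−1`) with
`A_ν` and `conj(A_ν)` unitary, and `v` with `V` unitary and `V = J·conj(V)·J⁻¹`. -/
structure FreeProdUOSympl (r' : ℕ) (M' : Fin r' → ℕ) (m : ℕ) where
  carrier : Type
  [isRing : Ring carrier]
  [isAlgebra : Algebra ℂ carrier]
  [isStarRing : StarRing carrier]
  [isStarModule : StarModule ℂ carrier]
  a : ∀ ν : Fin r', Matrix (Fin (M' ν)) (Fin (M' ν)) carrier
  v : Matrix (Fin m ⊕ Fin m) (Fin m ⊕ Fin m) carrier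
  rel_a : ∀ ν, BiUnitary (a ν)
  rel_v : OrthRel (symplJSum m) v
  universal : ∀ (B : Type) [Ring B] [Algebra ℂ B] [StarRing B] [StarModule ℂ B]
      (b : ∀ ν : Fin r', Matrix (Fin (M' ν)) (Fin (M' ν)) B)
      (w : Matrix (Fin m ⊕ Fin m) (Fin m ⊕ Fin m) B),
      (∀ ν, BiUnitary (b ν)) → OrthRel (symplJSum m) w →
      ∃! φ : carrier →⋆ₐ[ℂ] B,
        (∀ ν j k, φ (a ν j k) = b ν j k) ∧ ∀ p t, φ (v p t) = w p t

attribute [instance] FreeProdUOSympl.isRing FreeProdUOSympl.isAlgebra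
  FreeProdUOSympl.isStarRing FreeProdUOSympl.isStarModule

/-!
Sending `U` to the block-diagonal matrix with blocks `diag(A_ν, conj A_ν)` (`ν < r`) and `V`
(`ν = r`) respects the relations of `Pol(O_F⁺)`, because on the last block `F = J` (`q_r = 1`);
this gives a *-homomorphism `φ`, onto since its image contains the generators, which kills `I`.
Conversely, writing `B_{μν}` and `D_{μν}` for the blocks of `U` on `P_μ × Q_ν` and `Q_μ × Q_ν`,
the relation `U F = F conj(U)` gives `B_{μν} = -q_μ q_ν conj(C_{μν})` and
`D_{μν} = (q_ν / q_μ) conj(A_{μν})`, so modulo `I` the matrix `U` is itself of that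
block-diagonal form. Its blocks then satisfy the relations of the free product, which yields `ψ`
with `ψ ∘ φ` the quotient map by `I`; hence `ker φ = I`.
-/

open scoped Matrix

section StarIdeal

variable {A : Type} [Ring A] [StarRing A]

theorem isStarIdeal_starIdealSpan (S : Set A) : IsStarIdeal (starIdealSpan S) :=
  ⟨fun _ hT => hT.1.1, fun a b ha hb T hT => hT.1.2.1 a b (ha T hT) (hb T hT),
    fun x a ha => ⟨fun T hT => (hT.1.2.2.1 x a (ha T hT)).1,
      fun T hT => (hT.1.2.2.1 x a (ha T hT)).2⟩,
    fun a ha T hT => hT.1.2.2.2 a (ha T hT)⟩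

theorem subset_starIdealSpan (S : Set A) : S ⊆ starIdealSpan S :=
  fun _ hx _ hT => hT.2 hx

theorem starIdealSpan_subset {S T : Set A} (hT : IsStarIdeal T) (hS : S ⊆ T) :
    starIdealSpan S ⊆ T :=
  fun _ hx => hx T ⟨hT, hS⟩

theorem isStarIdeal_ker {B F : Type} [Ring B] [StarRing B] [FunLike F A B] [RingHomClass F A B]
    [StarHomClass F A B] (f : F) : IsStarIdeal {x | f x = 0} :=
  ⟨map_zero f, fun _ _ ha hb => by simp_all, fun _ _ ha => by simp_all,
    fun a (ha : f a = 0) => show f (star a) = 0 by rw [map_star, ha, star_zero]⟩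

def IsStarIdeal.toTwoSidedIdeal {I : Set A} (hI : IsStarIdeal I) : TwoSidedIdeal A :=
  .mk' I hI.1 (hI.2.1 _ _) (fun h => by simpa using (hI.2.2.1 (-1) _ h).1)
    (fun h => (hI.2.2.1 _ _ h).1) (fun h => (hI.2.2.1 _ _ h).2)

end StarIdeal

namespace RingCon

variable {A : Type} [Ring A] [StarRing A] (c : RingCon A)

abbrev quotientStarRing (hc : ∀ {a b}, c a b → c (star a) (star b)) :
    StarRing c.Quotient where
  star := Quotient.map' star fun _ _ => hc
  star_involutive := Quotient.ind' fun a => congrArg Quotient.mk'' (star_star a)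
  star_mul := Quotient.ind₂' fun a b => congrArg Quotient.mk'' (star_mul a b)
  star_add := Quotient.ind₂' fun a b => congrArg Quotient.mk'' (star_add a b)

end RingCon

theorem IsStarIdeal.exists_starAlgHom_ker_eq {A : Type} [Ring A] [Algebra ℂ A] [StarRing A]
    [StarModule ℂ A] {I : Set A} (hI : IsStarIdeal I) :
    ∃ (Q : Type) (_ : Ring Q) (_ : Algebra ℂ Q) (_ : StarRing Q) (_ : StarModule ℂ Q)
      (π : A →⋆ₐ[ℂ] Q), ∀ a, π a = 0 ↔ a ∈ I := by
  set c := hI.toTwoSidedIdeal.ringCon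
  have hc : ∀ {a b}, c a b → c (star a) (star b) := fun {a b} h => by
    rw [TwoSidedIdeal.rel_iff, IsStarIdeal.toTwoSidedIdeal, TwoSidedIdeal.mem_mk'] at h ⊢
    simpa using hI.2.2.2 _ h
  let _ := c.quotientStarRing hc
  have : StarModule ℂ c.Quotient :=
    ⟨fun z => Quotient.ind' fun a => congrArg Quotient.mk'' (star_smul z a)⟩
  refine ⟨c.Quotient, inferInstance, inferInstance, inferInstance, this,
    { c.mkₐ ℂ with map_star' := fun _ => rfl }, fun a => ?_⟩
  change (a : c.Quotient) = ((0 : A) : c.Quotient) ↔ a ∈ I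
  rw [c.eq, ← TwoSidedIdeal.mem_iff, IsStarIdeal.toTwoSidedIdeal, TwoSidedIdeal.mem_mk']

theorem ker_subset_starIdealSpan {A B : Type} [Ring A] [Algebra ℂ A] [StarRing A]
    [StarModule ℂ A] [Ring B] [Algebra ℂ B] [StarRing B] {φ : A →⋆ₐ[ℂ] B} {S : Set A}
    (h : ∀ (Q : Type) [Ring Q] [Algebra ℂ Q] [StarRing Q] [StarModule ℂ Q] (π : A →⋆ₐ[ℂ] Q),
      (∀ s ∈ S, π s = 0) → ∃ ψ : B →⋆ₐ[ℂ] Q, ψ.comp φ = π) :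
    {x | φ x = 0} ⊆ starIdealSpan S := by
  obtain ⟨Q, _, _, _, _, π, hπ⟩ := (isStarIdeal_starIdealSpan S).exists_starAlgHom_ker_eq
  obtain ⟨ψ, hψ⟩ := h Q π fun s hs => (hπ s).2 (subset_starIdealSpan S hs)
  intro x (hx : φ x = 0)
  exact (hπ x).1 (by rw [← hψ, StarAlgHom.comp_apply, hx, map_zero])

section Transport

variable {ι : Type} {A B : Type} [Ring A] [Algebra ℂ A] [StarRing A] [Ring B] [Algebra ℂ B]
  [StarRing B] (f : A →⋆ₐ[ℂ] B)

@[simp]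
theorem StarAlgHom.map_matrix_conjTranspose (u : Matrix ι ι A) : uᴴ.map f = (u.map f)ᴴ :=
  Matrix.conjTranspose_map f (map_star f)

@[simp]
theorem StarAlgHom.map_matrix_map_star (u : Matrix ι ι A) :
    (u.map star).map f = (u.map f).map star := by
  simp [Matrix.map_map, Function.comp_def, map_star]

@[simp]
theorem StarAlgHom.map_matrix_map_algebraMap (F : Matrix ι ι ℂ) :
    (F.map (algebraMap ℂ A)).map f = F.map (algebraMap ℂ B) := by
  simp [Matrix.map_map, Function.comp_def, AlgHomClass.commutes]

variable [Fintype ι] [DecidableEq ι]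

theorem OrthRel.map {F : Matrix ι ι ℂ} {u : Matrix ι ι A} (h : OrthRel F u) :
    OrthRel F (u.map f) := by
  obtain ⟨h1, h2, h3⟩ := h
  refine ⟨?_, ?_, ?_⟩
  · rw [← f.map_matrix_conjTranspose, ← Matrix.map_mul, h1,
      Matrix.map_one _ (map_zero f) (map_one f)]
  · rw [← f.map_matrix_conjTranspose, ← Matrix.map_mul, h2,
      Matrix.map_one _ (map_zero f) (map_one f)]
  · rw [← f.map_matrix_map_algebraMap, ← f.map_matrix_map_star, ← Matrix.map_mul,
      ← Matrix.map_mul, h3]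

theorem BiUnitary.map {u : Matrix ι ι A} (h : BiUnitary u) : BiUnitary (u.map f) := by
  obtain ⟨h1, h2, h3, h4⟩ := h
  refine ⟨?_, ?_, ?_, ?_⟩ <;>
    simp only [← f.map_matrix_conjTranspose, ← f.map_matrix_map_star, ← Matrix.map_mul, h1, h2,
      h3, h4, Matrix.map_one _ (map_zero f) (map_one f)]

variable {f}

theorem OrthRel.of_map (hf : Function.Injective f) {F : Matrix ι ι ℂ} {u : Matrix ι ι A}
    (h : OrthRel F (u.map f)) : OrthRel F u := by
  obtain ⟨h1, h2, h3⟩ := h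
  have hinj {x y : Matrix ι ι A} (h : x.map f = y.map f) : x = y := Matrix.map_injective hf h
  refine ⟨hinj ?_, hinj ?_, hinj ?_⟩
  · rwa [Matrix.map_mul, f.map_matrix_conjTranspose, Matrix.map_one _ (map_zero f) (map_one f)]
  · rwa [Matrix.map_mul, f.map_matrix_conjTranspose, Matrix.map_one _ (map_zero f) (map_one f)]
  · rwa [Matrix.map_mul, Matrix.map_mul, f.map_matrix_map_algebraMap, f.map_matrix_map_star]

theorem BiUnitary.of_map (hf : Function.Injective f) {u : Matrix ι ι A}
    (h : BiUnitary (u.map f)) : BiUnitary u := by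
  obtain ⟨h1, h2, h3, h4⟩ := h
  have hinj {x y : Matrix ι ι A} (h : x.map f = y.map f) : x = y := Matrix.map_injective hf h
  refine ⟨hinj ?_, hinj ?_, hinj ?_, hinj ?_⟩ <;>
    simpa only [Matrix.map_mul, f.map_matrix_conjTranspose, f.map_matrix_map_star,
      Matrix.map_one _ (map_zero f) (map_one f)]

end Transport

section Universal

variable {X : Type} [Ring X] [Algebra ℂ X] [StarRing X] [StarModule ℂ X]

theorem PolO.hom_ext {ι : Type} [Fintype ι] [DecidableEq ι] {F : Matrix ι ι ℂ} (P : PolO F)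
    {φ ψ : P.carrier →⋆ₐ[ℂ] X} (h : ∀ j k, φ (P.u j k) = ψ (P.u j k)) : φ = ψ := by
  obtain ⟨_, -, huniq⟩ := P.universal X (P.u.map ψ) (P.rel.map ψ)
  exact (huniq φ h).trans (huniq ψ fun _ _ => rfl).symm

variable {r' : ℕ} {M' : Fin r' → ℕ} {m : ℕ} (B : FreeProdUOSympl r' M' m)

theorem FreeProdUOSympl.hom_ext {φ ψ : B.carrier →⋆ₐ[ℂ] X}
    (ha : ∀ ν j k, φ (B.a ν j k) = ψ (B.a ν j k)) (hv : ∀ p t, φ (B.v p t) = ψ (B.v p t)) :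
    φ = ψ := by
  obtain ⟨_, -, huniq⟩ := B.universal X (fun ν => (B.a ν).map ψ) (B.v.map ψ)
    (fun ν => (B.rel_a ν).map ψ) (B.rel_v.map ψ)
  exact (huniq φ ⟨ha, hv⟩).trans (huniq ψ ⟨fun _ _ _ => rfl, fun _ _ => rfl⟩).symm

theorem FreeProdUOSympl.eq_top_of_generators_mem (S : StarSubalgebra ℂ B.carrier)
    (ha : ∀ ν j k, B.a ν j k ∈ S) (hv : ∀ p t, B.v p t ∈ S) : S = ⊤ := by
  obtain ⟨ψ, hψ, -⟩ := B.universal S (fun ν => .of fun j k => ⟨B.a ν j k, ha ν j k⟩)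
    (.of fun p t => ⟨B.v p t, hv p t⟩)
    (fun ν => BiUnitary.of_map (f := S.subtype) Subtype.val_injective (B.rel_a ν))
    (OrthRel.of_map (f := S.subtype) Subtype.val_injective B.rel_v)
  have hid : S.subtype.comp ψ = StarAlgHom.id ℂ B.carrier :=
    B.hom_ext (fun ν j k => congrArg Subtype.val (hψ.1 ν j k))
      (fun p t => congrArg Subtype.val (hψ.2 p t))
  refine eq_top_iff.2 fun y _ => ?_
  have hy : ((ψ y : S) : B.carrier) = y := DFunLike.congr_fun hid y
  exact hy ▸ (ψ y).2

end Universal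

section Blocks

variable {A : Type} [Ring A] [Algebra ℂ A] [StarRing A]

theorem orthRel_fromBlocks_iff {n : Type} [Fintype n] [DecidableEq n] (c d : ℂ)
    (a : Matrix n n A) :
    OrthRel (Matrix.fromBlocks 0 (c • 1) (d • 1) 0) (Matrix.fromBlocks a 0 0 (a.map star)) ↔
      BiUnitary a := by
  have hmap : (Matrix.fromBlocks 0 (c • 1) (d • 1) 0 : Matrix (n ⊕ n) (n ⊕ n) ℂ).map
      (algebraMap ℂ A) = Matrix.fromBlocks 0 (c • 1) (d • 1) 0 := by
    ext (i | i) (j | j) <;> by_cases h : i = j <;> simp [h, Algebra.algebraMap_eq_smul_one]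
  simp only [OrthRel, BiUnitary, hmap, Matrix.fromBlocks_conjTranspose, Matrix.conjTranspose_zero,
    Matrix.fromBlocks_multiply, mul_zero, add_zero, zero_mul, zero_add, ← Matrix.fromBlocks_one,
    Matrix.fromBlocks_inj, true_and, and_true, Algebra.mul_smul_comm, Algebra.smul_mul_assoc,
    mul_one, one_mul, smul_zero, Matrix.fromBlocks_map, star_zero, Matrix.map_zero, Matrix.map_map,
    star_involutive.comp_self, Matrix.map_id]
  tauto

theorem orthRel_blockDiagonal'_iff {o : Type} [Fintype o] [DecidableEq o] {ι : o → Type}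
    [∀ i, Fintype (ι i)] [∀ i, DecidableEq (ι i)]
    (F : ∀ i, Matrix (ι i) (ι i) ℂ) (g : ∀ i, Matrix (ι i) (ι i) A) :
    OrthRel (Matrix.blockDiagonal' F) (Matrix.blockDiagonal' g) ↔ ∀ i, OrthRel (F i) (g i) := by
  simp only [OrthRel, Matrix.blockDiagonal'_conjTranspose, ← Matrix.blockDiagonal'_mul,
    ← Matrix.blockDiagonal'_one, Matrix.blockDiagonal'_map _ _ (map_zero _),
    Matrix.blockDiagonal'_map _ _ (star_zero A), Matrix.blockDiagonal'_inj, funext_iff, forall_and,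
    Pi.one_apply]

end Blocks

theorem FCaseII_eq_blockDiagonal' (r : ℕ) (q : Fin r → ℝ) (M : Fin r → ℕ) :
    FCaseII r q M = Matrix.blockDiagonal' fun ν =>
      Matrix.fromBlocks 0 ((q ν : ℂ) • 1) ((-(q ν : ℂ)⁻¹) • 1) 0 := by
  ext ⟨μ, x⟩ ⟨ν, y⟩
  by_cases h : μ = ν
  · subst h
    rcases x with j | j <;> rcases y with k | k <;>
      simp [FCaseII, Matrix.one_apply, Fin.val_eq_val, neg_ite]
  · rw [Matrix.blockDiagonal'_apply_ne _ _ _ h]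
    rcases x with j | j <;> rcases y with k | k <;> simp [FCaseII, h]

theorem symplJSum_eq_fromBlocks (m : ℕ) :
    symplJSum m = Matrix.fromBlocks 0 ((1 : ℂ) • 1) ((-1 : ℂ) • 1) 0 := by
  ext (j | j) (k | k) <;> simp [symplJSum, Matrix.one_apply, Fin.val_eq_val, neg_ite]

section FCaseIIEntries

variable {A : Type} [Ring A] [Algebra ℂ A] {r : ℕ} {q : Fin r → ℝ} {M : Fin r → ℕ}

theorem CaseIIIdx.inl_eq_of_val_eq {μ ν : Fin r} {j : Fin (M μ)} {k : Fin (M ν)}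
    (h : μ = ν ∧ (j : ℕ) = k) : (⟨μ, .inl j⟩ : CaseIIIdx r M) = ⟨ν, .inl k⟩ := by
  obtain ⟨rfl, hjk⟩ := h
  rw [Fin.ext hjk]

theorem CaseIIIdx.inr_eq_of_val_eq {μ ν : Fin r} {j : Fin (M μ)} {k : Fin (M ν)}
    (h : μ = ν ∧ (j : ℕ) = k) : (⟨μ, .inr j⟩ : CaseIIIdx r M) = ⟨ν, .inr k⟩ := by
  obtain ⟨rfl, hjk⟩ := h
  rw [Fin.ext hjk]

theorem mul_FCaseII_apply_inl (u : Matrix (CaseIIIdx r M) (CaseIIIdx r M) A)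
    (a : CaseIIIdx r M) (ν : Fin r) (k : Fin (M ν)) :
    (u * (FCaseII r q M).map (algebraMap ℂ A)) a ⟨ν, .inl k⟩ =
      (-(q ν : ℂ)⁻¹) • u a ⟨ν, .inr k⟩ := by
  rw [Matrix.mul_apply, Fintype.sum_eq_single ⟨ν, .inr k⟩]
  · simp [FCaseII, Algebra.smul_def, Algebra.commutes]
  · rintro ⟨μ, j | j⟩ h
    · simp [FCaseII]
    · simp [FCaseII, mt CaseIIIdx.inr_eq_of_val_eq h]

theorem FCaseII_mul_apply_inl (w : Matrix (CaseIIIdx r M) (CaseIIIdx r M) A) (ν : Fin r)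
    (j : Fin (M ν)) (b : CaseIIIdx r M) :
    ((FCaseII r q M).map (algebraMap ℂ A) * w) ⟨ν, .inl j⟩ b =
      (q ν : ℂ) • w ⟨ν, .inr j⟩ b := by
  rw [Matrix.mul_apply, Fintype.sum_eq_single ⟨ν, .inr j⟩]
  · simp [FCaseII, Algebra.smul_def]
  · rintro ⟨μ, k | k⟩ h
    · simp [FCaseII]
    · simp [FCaseII, mt CaseIIIdx.inr_eq_of_val_eq h.symm]

theorem FCaseII_mul_apply_inr (w : Matrix (CaseIIIdx r M) (CaseIIIdx r M) A) (ν : Fin r)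
    (j : Fin (M ν)) (b : CaseIIIdx r M) :
    ((FCaseII r q M).map (algebraMap ℂ A) * w) ⟨ν, .inr j⟩ b =
      (-(q ν : ℂ)⁻¹) • w ⟨ν, .inl j⟩ b := by
  rw [Matrix.mul_apply, Fintype.sum_eq_single ⟨ν, .inl j⟩]
  · simp [FCaseII, Algebra.smul_def]
  · rintro ⟨μ, k | k⟩ h
    · simp [FCaseII, mt CaseIIIdx.inl_eq_of_val_eq h.symm]
    · simp [FCaseII]

variable [StarRing A] {w : Matrix (CaseIIIdx r M) (CaseIIIdx r M) A}

theorem inl_inr_eq_of_mul_FCaseII (hq : ∀ ν, q ν ≠ 0)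
    (hw : w * (FCaseII r q M).map (algebraMap ℂ A) =
      (FCaseII r q M).map (algebraMap ℂ A) * w.map star)
    (μ ν : Fin r) (j : Fin (M μ)) (k : Fin (M ν)) :
    w ⟨μ, .inl j⟩ ⟨ν, .inr k⟩ = (-(q μ * q ν : ℂ)) • star (w ⟨μ, .inr j⟩ ⟨ν, .inl k⟩) := by
  have e := congr_fun₂ hw ⟨μ, .inl j⟩ ⟨ν, .inl k⟩
  rw [mul_FCaseII_apply_inl, FCaseII_mul_apply_inl, Matrix.map_apply] at e
  have hν : (q ν : ℂ) ≠ 0 := by exact_mod_cast hq ν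
  calc w ⟨μ, .inl j⟩ ⟨ν, .inr k⟩
      = (-(q ν : ℂ)) • ((-(q ν : ℂ)⁻¹) • w ⟨μ, .inl j⟩ ⟨ν, .inr k⟩) := by
        rw [smul_smul, neg_mul_neg, mul_inv_cancel₀ hν, one_smul]
    _ = _ := by rw [e, smul_smul, neg_mul, mul_comm]

theorem inr_inr_eq_of_mul_FCaseII (hq : ∀ ν, q ν ≠ 0)
    (hw : w * (FCaseII r q M).map (algebraMap ℂ A) =
      (FCaseII r q M).map (algebraMap ℂ A) * w.map star)
    (μ ν : Fin r) (j : Fin (M μ)) (k : Fin (M ν)) :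
    w ⟨μ, .inr j⟩ ⟨ν, .inr k⟩ =
      ((q ν : ℂ) * (q μ : ℂ)⁻¹) • star (w ⟨μ, .inl j⟩ ⟨ν, .inl k⟩) := by
  have e := congr_fun₂ hw ⟨μ, .inr j⟩ ⟨ν, .inl k⟩
  rw [mul_FCaseII_apply_inl, FCaseII_mul_apply_inr, Matrix.map_apply] at e
  have hν : (q ν : ℂ) ≠ 0 := by exact_mod_cast hq ν
  calc w ⟨μ, .inr j⟩ ⟨ν, .inr k⟩
      = (-(q ν : ℂ)) • ((-(q ν : ℂ)⁻¹) • w ⟨μ, .inr j⟩ ⟨ν, .inr k⟩) := by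
        rw [smul_smul, neg_mul_neg, mul_inv_cancel₀ hν, one_smul]
    _ = _ := by rw [e, smul_smul, neg_mul_neg]

end FCaseIIEntries

section CaseIIBlocks

variable {r : ℕ} (hr : 1 ≤ r) {M : Fin r → ℕ} {A : Type} [Ring A] [StarRing A]

/-- The paper's last block index `r`, counted from `0`. -/
abbrev caseIILast : Fin r := ⟨r - 1, Nat.sub_lt_self Nat.one_pos hr⟩

theorem castLE_or_eq_caseIILast (ν : Fin r) :
    (∃ ν' : Fin (r - 1), Fin.castLE (Nat.sub_le r 1) ν' = ν) ∨ ν = caseIILast hr := by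
  by_cases h : (ν : ℕ) < r - 1
  · exact .inl ⟨⟨ν, h⟩, rfl⟩
  · exact .inr (Fin.ext (show (ν : ℕ) = r - 1 by omega))

/-- The diagonal blocks of the image of `U` in `Pol(O_F⁺) / I`. -/
def caseIIBlocks
    (a : ∀ ν : Fin (r - 1), Matrix (Fin (M (Fin.castLE (Nat.sub_le r 1) ν)))
      (Fin (M (Fin.castLE (Nat.sub_le r 1) ν))) A)
    (v : Matrix (Fin (M (caseIILast hr)) ⊕ Fin (M (caseIILast hr)))
      (Fin (M (caseIILast hr)) ⊕ Fin (M (caseIILast hr))) A)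
    (ν : Fin r) : Matrix (Fin (M ν) ⊕ Fin (M ν)) (Fin (M ν) ⊕ Fin (M ν)) A :=
  if h : (ν : ℕ) < r - 1 then Matrix.fromBlocks (a ⟨ν, h⟩) 0 0 ((a ⟨ν, h⟩).map star)
  else (Fin.ext (show r - 1 = ν by omega) : caseIILast hr = ν) ▸ v

variable {hr}
variable (a : ∀ ν : Fin (r - 1), Matrix (Fin (M (Fin.castLE (Nat.sub_le r 1) ν)))
      (Fin (M (Fin.castLE (Nat.sub_le r 1) ν))) A)
    (v : Matrix (Fin (M (caseIILast hr)) ⊕ Fin (M (caseIILast hr)))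
      (Fin (M (caseIILast hr)) ⊕ Fin (M (caseIILast hr))) A)

@[simp]
theorem caseIIBlocks_castLE (ν : Fin (r - 1)) :
    caseIIBlocks hr a v (Fin.castLE (Nat.sub_le r 1) ν) =
      Matrix.fromBlocks (a ν) 0 0 ((a ν).map star) :=
  dif_pos ν.2

@[simp]
theorem caseIIBlocks_caseIILast : caseIIBlocks hr a v (caseIILast hr) = v :=
  dif_neg (lt_irrefl _)

theorem blockDiagonal'_caseIIBlocks_inr_inl {μ ν : Fin r} (j : Fin (M μ)) (k : Fin (M ν))
    (h : (μ, ν) ≠ (caseIILast hr, caseIILast hr)) :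
    Matrix.blockDiagonal' (caseIIBlocks hr a v) ⟨μ, .inr j⟩ ⟨ν, .inl k⟩ = 0 := by
  by_cases hμν : μ = ν
  · subst hμν
    rcases castLE_or_eq_caseIILast hr μ with ⟨μ, rfl⟩ | rfl
    · simp
    · exact absurd rfl h
  · exact Matrix.blockDiagonal'_apply_ne _ _ _ hμν

theorem map_blockDiagonal'_caseIIBlocks [Algebra ℂ A] {B : Type} [Ring B] [Algebra ℂ B]
    [StarRing B] (f : A →⋆ₐ[ℂ] B) :
    (Matrix.blockDiagonal' (caseIIBlocks hr a v)).map f =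
      Matrix.blockDiagonal' (caseIIBlocks hr (fun ν => (a ν).map f) (v.map f)) := by
  rw [Matrix.blockDiagonal'_map _ _ (map_zero f)]
  congr 1
  ext1 ν
  rcases castLE_or_eq_caseIILast hr ν with ⟨ν, rfl⟩ | rfl
  · simp [Matrix.fromBlocks_map, Matrix.map_map, Function.comp_def, map_star]
  · simp

theorem orthRel_caseIIBlocks_iff [Algebra ℂ A] {q : Fin r → ℝ}
    (hqlast : q (caseIILast hr) = 1) :
    OrthRel (FCaseII r q M) (Matrix.blockDiagonal' (caseIIBlocks hr a v)) ↔
      (∀ ν, BiUnitary (a ν)) ∧ OrthRel (symplJSum (M (caseIILast hr))) v := by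
  rw [FCaseII_eq_blockDiagonal', orthRel_blockDiagonal'_iff]
  constructor
  · intro h
    refine ⟨fun ν => ?_, ?_⟩
    · have := h (Fin.castLE (Nat.sub_le r 1) ν)
      rwa [caseIIBlocks_castLE, orthRel_fromBlocks_iff] at this
    · simpa [hqlast, symplJSum_eq_fromBlocks] using h (caseIILast hr)
  · rintro ⟨ha, hv⟩ ν
    rcases castLE_or_eq_caseIILast hr ν with ⟨ν, rfl⟩ | rfl
    · rw [caseIIBlocks_castLE, orthRel_fromBlocks_iff]
      exact ha ν
    · simpa [hqlast, symplJSum_eq_fromBlocks] using hv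

theorem eq_blockDiagonal'_caseIIBlocks [Algebra ℂ A] {q : Fin r → ℝ} (hq : ∀ ν, q ν ≠ 0)
    {w : Matrix (CaseIIIdx r M) (CaseIIIdx r M) A}
    (hw : w * (FCaseII r q M).map (algebraMap ℂ A) =
      (FCaseII r q M).map (algebraMap ℂ A) * w.map star)
    (hC : ∀ μ ν j k, (μ, ν) ≠ (caseIILast hr, caseIILast hr) → w ⟨μ, .inr j⟩ ⟨ν, .inl k⟩ = 0)
    (hA : ∀ μ ν j k, μ ≠ ν → w ⟨μ, .inl j⟩ ⟨ν, .inl k⟩ = 0) :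
    w = Matrix.blockDiagonal' (caseIIBlocks hr
      (fun ν => .of fun j k =>
        w ⟨Fin.castLE (Nat.sub_le r 1) ν, .inl j⟩ ⟨Fin.castLE (Nat.sub_le r 1) ν, .inl k⟩)
      (.of fun p t => w ⟨caseIILast hr, p⟩ ⟨caseIILast hr, t⟩)) := by
  have hB : ∀ μ ν j k, (μ, ν) ≠ (caseIILast hr, caseIILast hr) →
      w ⟨μ, .inl j⟩ ⟨ν, .inr k⟩ = 0 := fun μ ν j k h => by
    rw [inl_inr_eq_of_mul_FCaseII hq hw, hC μ ν j k h, star_zero, smul_zero]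
  have hD : ∀ μ ν j k, μ ≠ ν → w ⟨μ, .inr j⟩ ⟨ν, .inr k⟩ = 0 := fun μ ν j k h => by
    rw [inr_inr_eq_of_mul_FCaseII hq hw, hA μ ν j k h, star_zero, smul_zero]
  ext ⟨μ, x⟩ ⟨ν, y⟩
  by_cases hμν : μ = ν
  · subst hμν
    rw [Matrix.blockDiagonal'_apply_eq]
    rcases castLE_or_eq_caseIILast hr μ with ⟨μ, rfl⟩ | rfl
    · have hne : (Fin.castLE (Nat.sub_le r 1) μ, Fin.castLE (Nat.sub_le r 1) μ) ≠
          (caseIILast hr, caseIILast hr) := fun h => μ.2.ne (congrArg (fun p => (p.1 : ℕ)) h)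
      simp only [caseIIBlocks_castLE]
      rcases x with j | j <;> rcases y with k | k
      · rfl
      · exact hB _ _ j k hne
      · exact hC _ _ j k hne
      · rw [inr_inr_eq_of_mul_FCaseII hq hw, mul_inv_cancel₀ (by exact_mod_cast hq _), one_smul]
        rfl
    · simp only [caseIIBlocks_caseIILast, Matrix.of_apply]
  · have hne : (μ, ν) ≠ (caseIILast hr, caseIILast hr) := fun h => hμν (by simp_all)
    rw [Matrix.blockDiagonal'_apply_ne _ _ _ hμν]
    rcases x with j | j <;> rcases y with k | k
    exacts [hA _ _ j k hμν, hB _ _ j k hne, hC _ _ j k hne, hD _ _ j k hμν]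

end CaseIIBlocks

/-- in the Case II setting, the quotient of `Pol(O_F⁺)` by the two-sided
*-ideal `I` generated by all entries of the blocks `C_{μν}` (`(μ,ν) ≠ (r,r)`) and `A_{μν}`
(`μ ≠ ν`) is *-isomorphic to `(⋆_{ν=1}^{r−1} Pol(U⁺_{M_ν})) ⋆ Pol(O_J⁺)`, the class of an
entry of `A_{νν}` (`ν ≤ r−1`) corresponding to `a⁽ᵛ⁾_{jk}`, the class of an entry of
`A_{rr}` to the corresponding entry of the upper-left block of `V`, and the class of an
entry of `C_{rr}` to the corresponding entry of the lower-left block of `V`.  This is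
expressed by a surjective unital *-homomorphism whose kernel is exactly `I`. -/
theorem caseII_quotient_iso (r : ℕ) (hr : 1 ≤ r) (q : Fin r → ℝ) (hq0 : ∀ ν, 0 < q ν)
    (hqlast : q ⟨r - 1, by omega⟩ = 1) (M : Fin r → ℕ)
    (P : PolO (FCaseII r q M))
    (B : FreeProdUOSympl (r - 1) (fun ν => M (Fin.castLE (by omega) ν))
          (M ⟨r - 1, by omega⟩)) :
    ∃ φ : P.carrier →⋆ₐ[ℂ] B.carrier,
      Function.Surjective φ ∧
      (∀ (ν : Fin (r - 1)) (j k : Fin (M (Fin.castLE (by omega) ν))),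
        φ (P.u ⟨Fin.castLE (by omega) ν, .inl j⟩ ⟨Fin.castLE (by omega) ν, .inl k⟩) =
          B.a ν j k) ∧
      (∀ j k : Fin (M ⟨r - 1, by omega⟩),
        φ (P.u ⟨⟨r - 1, by omega⟩, .inl j⟩ ⟨⟨r - 1, by omega⟩, .inl k⟩) =
          B.v (.inl j) (.inl k)) ∧
      (∀ j k : Fin (M ⟨r - 1, by omega⟩),
        φ (P.u ⟨⟨r - 1, by omega⟩, .inr j⟩ ⟨⟨r - 1, by omega⟩, .inl k⟩) =
          B.v (.inr j) (.inl k)) ∧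
      {x : P.carrier | φ x = 0} =
        starIdealSpan
          {x : P.carrier |
            (∃ μ ν : Fin r,
              (μ, ν) ≠ ((⟨r - 1, by omega⟩ : Fin r), (⟨r - 1, by omega⟩ : Fin r)) ∧
              ∃ (j : Fin (M μ)) (k : Fin (M ν)), x = P.u ⟨μ, .inr j⟩ ⟨ν, .inl k⟩) ∨
            ∃ μ ν : Fin r, μ ≠ ν ∧
              ∃ (j : Fin (M μ)) (k : Fin (M ν)), x = P.u ⟨μ, .inl j⟩ ⟨ν, .inl k⟩} := by
  set W := Matrix.blockDiagonal' (caseIIBlocks hr B.a B.v)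
  obtain ⟨φ, hφ, -⟩ :=
    P.universal B.carrier W ((orthRel_caseIIBlocks_iff _ _ hqlast).2 ⟨B.rel_a, B.rel_v⟩)
  have hφa (ν j k) : φ (P.u ⟨Fin.castLE (Nat.sub_le r 1) ν, .inl j⟩
      ⟨Fin.castLE (Nat.sub_le r 1) ν, .inl k⟩) = B.a ν j k := by simp [hφ, W]
  have hφv (p t) : φ (P.u ⟨caseIILast hr, p⟩ ⟨caseIILast hr, t⟩) = B.v p t := by simp [hφ, W]
  refine ⟨φ, fun y => ?_, hφa, fun j k => hφv _ _, fun j k => hφv _ _, ?_⟩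
  · have htop := B.eq_top_of_generators_mem φ.range (fun ν j k => ⟨_, hφa ν j k⟩)
      (fun p t => ⟨_, hφv p t⟩)
    exact (htop ▸ StarSubalgebra.mem_top : y ∈ φ.range)
  refine Set.Subset.antisymm ?_ (starIdealSpan_subset (isStarIdeal_ker φ) ?_)
  · refine ker_subset_starIdealSpan fun Q _ _ _ _ π hπ => ?_
    have hu := eq_blockDiagonal'_caseIIBlocks (hr := hr) (fun ν => (hq0 ν).ne') (P.rel.map π).2.2
      (fun μ ν j k h => hπ _ (.inl ⟨μ, ν, h, j, k, rfl⟩))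
      (fun μ ν j k h => hπ _ (.inr ⟨μ, ν, h, j, k, rfl⟩))
    obtain ⟨hrel_a, hrel_v⟩ := (orthRel_caseIIBlocks_iff _ _ hqlast).1 (hu ▸ P.rel.map π)
    obtain ⟨ψ, hψ, -⟩ := B.universal Q _ _ hrel_a hrel_v
    have hW : W.map ψ = P.u.map π := by
      rw [map_blockDiagonal'_caseIIBlocks, hu]
      congr 2
      · ext ν j k; exact hψ.1 ν j k
      · ext p t; exact hψ.2 p t
    exact ⟨ψ, P.hom_ext fun a b => by simpa [hφ] using congr_fun₂ hW a b⟩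
  · rintro x (⟨μ, ν, h, j, k, rfl⟩ | ⟨μ, ν, h, j, k, rfl⟩)
    · simp [hφ, W, blockDiagonal'_caseIIBlocks_inr_inl _ _ j k h]
    · simp [hφ, W, Matrix.blockDiagonal'_apply_ne _ _ _ h]
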